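/- arXiv:2604.08078 — 4 statements merged into one kernel-verified Lean document; each statement's English description precedes it below -/
import Mathlib

section
/- Let (Ω, S, P) be a finitely additive probability content space. For every sequence (A_n)_{n∈ℕ} of sets in S, every function N : (ℕ → ℕ) → ℕ, and all u, v ∈ ℕ with v > u, there exists i ∈ ℕ such that: if P(⋂_{l=0}^{N(g)} ⋃_{j=l}^{g(l)} A_j) ≤ 2^{-v} holds for every g : ℕ → ℕ (where the intersection/union is taken only over indices where it makes sense, interpreting ⋃_{j=l}^{g(l)} A_j as empty if g(l) < l), then P(A_i) < 2^{-u}. -/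
/-!
Suppose every `P (A i)` is at least `ε = 2⁻ᵘ`. For each `l` the unions `⋃_{j=l}^{k} A_j` increase
with `k` and have bounded content, so there is a `g l` beyond which they gain less than `ε_l`,
where `∑ ε_l < ε / 2`. For `L = N g`, `A_L` lies in `⋃_{j=l}^{L} A_j` for every `l ≤ L`, so it
misses `⋂_{l ≤ L} ⋃_{j=l}^{g l} A_j` only on a set of content less than `ε / 2`. Hence that
intersection has content greater than `ε / 2 ≥ 2⁻ᵛ`.
-/

open Set

open scoped NNReal

namespace MeasureTheory

variable {α : Type*} {C : Set (Set α)}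

noncomputable def IsSetRing.nnrealAddContent (hC : IsSetRing C) (P : Set α → ℝ)
    (hP_nonneg : ∀ s ∈ C, 0 ≤ P s)
    (hP_add : ∀ s ∈ C, ∀ t ∈ C, Disjoint s t → P (s ∪ t) = P s + P t) : AddContent ℝ≥0 C :=
  hC.addContent_of_union (fun s ↦ (P s).toNNReal)
    (by
      have h : P ∅ = 0 := by simpa using hP_add ∅ hC.empty_mem ∅ hC.empty_mem (disjoint_empty _)
      simp [h])
    fun hs ht hst ↦ by
      rw [hP_add _ hs _ ht hst, Real.toNNReal_add (hP_nonneg _ hs) (hP_nonneg _ ht)]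

lemma IsSetRing.coe_nnrealAddContent (hC : IsSetRing C) {P : Set α → ℝ}
    (hP_nonneg : ∀ s ∈ C, 0 ≤ P s)
    (hP_add : ∀ s ∈ C, ∀ t ∈ C, Disjoint s t → P (s ∪ t) = P s + P t) {s : Set α}
    (hs : s ∈ C) : (hC.nnrealAddContent P hP_nonneg hP_add s : ℝ) = P s :=
  Real.coe_toNNReal _ (hP_nonneg s hs)

lemma IsSetAlgebra.exists_forall_addContent_sdiff_lt (hC : IsSetAlgebra C)
    (m : AddContent ℝ≥0 C) {s : ℕ → Set α} (hs : ∀ n, s n ∈ C) (hs_mono : Monotone s)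
    {δ : ℝ≥0} (hδ : 0 < δ) : ∃ n, ∀ k, m (s k \ s n) < δ := by
  have hm_mono : Monotone fun k ↦ m (s k) := fun k l hkl ↦
    addContent_mono hC.isSetRing.isSetSemiring (hs k) (hs l) (hs_mono hkl)
  have hm_bdd : BddAbove (range fun k ↦ m (s k)) :=
    ⟨m univ, forall_mem_range.2 fun k ↦
      addContent_mono hC.isSetRing.isSetSemiring (hs k) hC.univ_mem (subset_univ _)⟩
  obtain ⟨n, hn⟩ : ∃ n, ⨆ k, m (s k) < m (s n) + δ :=
    (((tendsto_atTop_ciSup hm_mono hm_bdd).add_const δ).eventually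
      (lt_mem_nhds (lt_add_of_pos_right _ hδ))).exists
  refine ⟨n, fun k ↦ ?_⟩
  have hsplit : m (s n) + m (s (max k n) \ s n) = m (s (max k n)) := by
    rw [← addContent_union hC.isSetRing (hs n) (hC.sdiff_mem (hs _) (hs n))
      disjoint_sdiff_right, union_sdiff_cancel (hs_mono (le_max_right k n))]
  calc m (s k \ s n) ≤ m (s (max k n) \ s n) :=
        addContent_mono hC.isSetRing.isSetSemiring (hC.sdiff_mem (hs k) (hs n))
          (hC.sdiff_mem (hs _) (hs n)) (sdiff_subset_sdiff_left (hs_mono (le_max_left k n)))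
    _ < δ := by
      refine lt_of_add_lt_add_left (a := m (s n)) ?_
      rw [hsplit]
      exact (le_ciSup hm_bdd (max k n)).trans_lt hn

lemma IsSetAlgebra.exists_addContent_lt_biInter_biUnion_add (hC : IsSetAlgebra C)
    (m : AddContent ℝ≥0 C) {A : ℕ → Set α} (hA : ∀ n, A n ∈ C) (N : (ℕ → ℕ) → ℕ)
    {δ : ℝ≥0} (hδ : 0 < δ) :
    ∃ g : ℕ → ℕ,
      m (A (N g)) < m (⋂ l ∈ Finset.range (N g + 1), ⋃ j ∈ Finset.Icc l (g l), A j) + δ := by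
  obtain ⟨ε, hε, c, hc, hcδ⟩ := NNReal.exists_pos_sum_of_countable hδ.ne' ℕ
  have hU : ∀ l k, ⋃ j ∈ Finset.Icc l k, A j ∈ C := fun l k ↦ hC.biUnion_mem _ fun j _ ↦ hA j
  have hU_mono : ∀ l, Monotone fun k ↦ ⋃ j ∈ Finset.Icc l k, A j := fun l k k' hkk' ↦
    biUnion_subset_biUnion_left (Finset.coe_subset.2 (Finset.Icc_subset_Icc_right hkk'))
  choose g hg using fun l ↦ hC.exists_forall_addContent_sdiff_lt m (hU l) (hU_mono l) (hε l)
  refine ⟨g, ?_⟩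
  set L := N g
  set X := ⋂ l ∈ Finset.range (L + 1), ⋃ j ∈ Finset.Icc l (g l), A j
  have hX : X ∈ C := hC.biInter_mem _ fun l _ ↦ hU l (g l)
  have hgap : m (A L \ X) < δ := calc
    m (A L \ X) = m (⋃ l ∈ Finset.range (L + 1), A L \ ⋃ j ∈ Finset.Icc l (g l), A j) := by
        simp only [X, sdiff_iInter]
    _ ≤ ∑ l ∈ Finset.range (L + 1), m (A L \ ⋃ j ∈ Finset.Icc l (g l), A j) :=
        addContent_biUnion_le hC.isSetRing fun l _ ↦ hC.sdiff_mem (hA L) (hU l (g l))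
    _ < ∑ l ∈ Finset.range (L + 1), ε l := by
        refine Finset.sum_lt_sum_of_nonempty Finset.nonempty_range_add_one fun l hl ↦ ?_
        have hAL : A L ⊆ ⋃ j ∈ Finset.Icc l L, A j := subset_biUnion_of_mem
          (u := A) (Finset.mem_coe.2 (Finset.mem_Icc.2 ⟨Finset.mem_range_succ_iff.1 hl, le_rfl⟩))
        exact (addContent_mono hC.isSetRing.isSetSemiring (hC.sdiff_mem (hA L) (hU l (g l)))
          (hC.sdiff_mem (hU l L) (hU l (g l))) (sdiff_subset_sdiff_left hAL)).trans_lt (hg l L)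
    _ ≤ c := sum_le_hasSum _ (fun _ _ ↦ zero_le) hc
    _ < δ := hcδ
  calc m (A L) ≤ m (X ∪ A L \ X) :=
        addContent_mono hC.isSetRing.isSetSemiring (hA L)
          (hC.union_mem hX (hC.sdiff_mem (hA L) hX)) (by simp)
    _ ≤ m X + m (A L \ X) := addContent_union_le hC.isSetRing hX (hC.sdiff_mem (hA L) hX)
    _ < m X + δ := add_lt_add_right hgap _

end MeasureTheory

open MeasureTheory

theorem avigad_dean_rute_combinatorial_general {Ω : Type*}
    (S : Set (Set Ω)) (P : Set Ω → ℝ)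
    (hempty : ∅ ∈ S) (hcompl : ∀ A ∈ S, Aᶜ ∈ S)
    (hunion : ∀ A ∈ S, ∀ B ∈ S, A ∪ B ∈ S)
    (hnonneg : ∀ A ∈ S, 0 ≤ P A)
    (hadd : ∀ A ∈ S, ∀ B ∈ S, Disjoint A B → P (A ∪ B) = P A + P B)
    (A : ℕ → Set Ω) (hAS : ∀ n, A n ∈ S)
    (N : (ℕ → ℕ) → ℕ) (u v : ℕ) (huv : u < v) :
    ∃ i : ℕ,
      (∀ g : ℕ → ℕ,
          P (⋂ l ∈ Finset.range (N g + 1), ⋃ j ∈ Finset.Icc l (g l), A j) ≤ (1 / 2 : ℝ) ^ v) →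
        P (A i) < (1 / 2 : ℝ) ^ u := by
  by_contra! h
  have hS : IsSetAlgebra S := ⟨hempty, fun s hs ↦ hcompl s hs, fun s t hs ht ↦ hunion s hs t ht⟩
  set m := hS.isSetRing.nnrealAddContent P hnonneg hadd
  obtain ⟨g, hg⟩ := hS.exists_addContent_lt_biInter_biUnion_add m hAS N
    (δ := (1 / 2) ^ (u + 1)) (by positivity)
  have hX : ⋂ l ∈ Finset.range (N g + 1), ⋃ j ∈ Finset.Icc l (g l), A j ∈ S :=
    hS.biInter_mem _ fun l _ ↦ hS.biUnion_mem _ fun j _ ↦ hAS j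
  have hgP := NNReal.coe_lt_coe.2 hg
  push_cast at hgP
  rw [hS.isSetRing.coe_nnrealAddContent hnonneg hadd (hAS _),
    hS.isSetRing.coe_nnrealAddContent hnonneg hadd hX] at hgP
  have hv : (1 / 2 : ℝ) ^ v ≤ (1 / 2) ^ (u + 1) :=
    pow_le_pow_of_le_one (by norm_num) (by norm_num) huv
  linarith [(h 0).1 g, (h (N g)).2, pow_succ (1 / 2 : ℝ) u]

theorem avigad_dean_rute_combinatorial {Ω : Type*} [Nonempty Ω]
    (S : Set (Set Ω)) (P : Set Ω → ℝ)
    (hempty : ∅ ∈ S) (hcompl : ∀ A ∈ S, Aᶜ ∈ S)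
    (hunion : ∀ A ∈ S, ∀ B ∈ S, A ∪ B ∈ S)
    (hnonneg : ∀ A ∈ S, 0 ≤ P A) (hle1 : ∀ A ∈ S, P A ≤ 1)
    (huniv : P Set.univ = 1)
    (hadd : ∀ A ∈ S, ∀ B ∈ S, Disjoint A B → P (A ∪ B) = P A + P B)
    (A : ℕ → Set Ω) (hAS : ∀ n, A n ∈ S)
    (N : (ℕ → ℕ) → ℕ) (u v : ℕ) (huv : u < v) :
    ∃ i : ℕ,
      (∀ g : ℕ → ℕ,
          P (⋂ l ∈ Finset.range (N g + 1), ⋃ j ∈ Finset.Icc l (g l), A j) ≤ (1 / 2 : ℝ) ^ v) →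
        P (A i) < (1 / 2 : ℝ) ^ u :=
  avigad_dean_rute_combinatorial_general S P hempty hcompl hunion hnonneg hadd A hAS N u v huv
end

section
/- Let (Ω, F, P) be a probability space, (A_n)_{n∈ℕ} a sequence of measurable sets, and ψ : ℕ → ℕ. The following are equivalent: (1) for all m ∈ ℕ and all g : ℕ → ℕ there exists k ≤ ψ(m) with P(⋃_{i=k}^{g(k)} A_i) ≤ 2^{-m}; (2) for all m, n ∈ ℕ, P(⋃_{i = ψ(m)}^{ψ(m)+n} A_i) ≤ 2^{-m}. -/
open MeasureTheory Set ENNReal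

theorem measure_biUnion_Icc_mono {Ω α : Type*} [MeasurableSpace Ω] [Preorder α]
    [LocallyFiniteOrder α] (μ : Measure Ω) (A : α → Set Ω) {a b c d : α}
    (hca : c ≤ a) (hbd : b ≤ d) :
    μ (⋃ i ∈ Finset.Icc a b, A i) ≤ μ (⋃ i ∈ Finset.Icc c d, A i) :=
  measure_mono <| biUnion_subset_biUnion_left <| by
    exact_mod_cast Finset.Icc_subset_Icc hca hbd

theorem metastable_modulus_iff_modulus_general {Ω : Type*} [MeasurableSpace Ω]
    (μ : Measure Ω)
    (A : ℕ → Set Ω)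
    (ψ : ℕ → ℕ) :
    (∀ m (g : ℕ → ℕ), ∃ k ≤ ψ m, μ (⋃ i ∈ Finset.Icc k (g k), A i) ≤ (1 / 2 : ℝ≥0∞) ^ m) ↔
      (∀ m n, μ (⋃ i ∈ Finset.Icc (ψ m) (ψ m + n), A i) ≤ (1 / 2 : ℝ≥0∞) ^ m) := by
  constructor
  · intro h m n
    -- a constant counterfunction makes the metastable window cover `[ψ m, ψ m + n]`
    obtain ⟨k, hk, hμ⟩ := h m fun _ => ψ m + n
    exact (measure_biUnion_Icc_mono μ A hk le_rfl).trans hμ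
  · intro h m g
    exact ⟨ψ m, le_rfl,
      (measure_biUnion_Icc_mono μ A le_rfl le_add_tsub).trans (h m (g (ψ m) - ψ m))⟩

theorem metastable_modulus_iff_modulus {Ω : Type*} [MeasurableSpace Ω]
    (μ : Measure Ω) [IsProbabilityMeasure μ]
    (A : ℕ → Set Ω) (hmeas : ∀ n, MeasurableSet (A n))
    (ψ : ℕ → ℕ) :
    (∀ m (g : ℕ → ℕ), ∃ k ≤ ψ m, μ (⋃ i ∈ Finset.Icc k (g k), A i) ≤ (1 / 2 : ℝ≥0∞) ^ m) ↔
      (∀ m n, μ (⋃ i ∈ Finset.Icc (ψ m) (ψ m + n), A i) ≤ (1 / 2 : ℝ≥0∞) ^ m) :=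
  metastable_modulus_iff_modulus_general μ A ψ
end

section
/- Let (Ω, F, P) be a probability space, (X_n)_{n∈ℕ} a sequence of real-valued measurable functions, and Φ : ℕ × ℕ → ℕ a rate of almost sure convergence, i.e. for all m, k ∈ ℕ there exists n ≤ Φ(m,k) such that for all l ∈ ℕ, P({ω : ∀ i, j ∈ [n, n+l], |X_i(ω) − X_j(ω)| ≤ 2^{-k}}) ≥ 1 − 2^{-m}. Then Φ is also a rate of almost uniform convergence: for all m, k ∈ ℕ there exists n ≤ Φ(m,k) with P({ω : ∀ i, j ≥ n, |X_i(ω) − X_j(ω)| ≤ 2^{-k}}) ≥ 1 − 2^{-m}. -/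
/-! The events asking for `2^{-k}`-closeness on the windows `[n, n + l]` decrease in `l` and
intersect to the event asking for it on the whole tail `[n, ∞)`, so the uniform lower bound
`1 - 2^{-m}` on their probabilities passes to the limit by continuity of `P` from above. -/

open MeasureTheory Set ENNReal

section Windows

variable {Ω : Type*} (p : ℕ → ℕ → Ω → Prop) (n : ℕ)

theorem antitone_setOf_forall_Icc :
    Antitone fun l : ℕ => {ω | ∀ i ∈ Icc n (n + l), ∀ j ∈ Icc n (n + l), p i j ω} :=
  fun _ _ hab _ hω i hi j hj =>
    hω i ⟨hi.1, hi.2.trans (by omega)⟩ j ⟨hj.1, hj.2.trans (by omega)⟩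

theorem iInter_setOf_forall_Icc :
    ⋂ l : ℕ, {ω | ∀ i ∈ Icc n (n + l), ∀ j ∈ Icc n (n + l), p i j ω} =
      {ω | ∀ i ≥ n, ∀ j ≥ n, p i j ω} := by
  ext ω
  simp only [mem_iInter, mem_ofPred_eq, mem_Icc]
  refine ⟨fun hω i hi j hj => ?_, fun hω l i hi j hj => hω i hi.1 j hj.1⟩
  exact hω (max i j - n) i ⟨hi, by omega⟩ j ⟨hj, by omega⟩

theorem measurableSet_setOf_forall_Icc [MeasurableSpace Ω]
    (hp : ∀ i j, MeasurableSet {ω | p i j ω}) (l : ℕ) :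
    MeasurableSet {ω | ∀ i ∈ Icc n (n + l), ∀ j ∈ Icc n (n + l), p i j ω} := by
  simp only [ofPred_forall]
  exact .biInter (to_countable _) fun i _ => .biInter (to_countable _) fun j _ => hp i j

end Windows

theorem le_measure_iInter_of_antitone {Ω : Type*} [MeasurableSpace Ω] (μ : Measure Ω)
    [IsFiniteMeasure μ] {A : ℕ → Set Ω} (hA : Antitone A) (hmeas : ∀ l, MeasurableSet (A l))
    {c : ℝ≥0∞} (hc : ∀ l, c ≤ μ (A l)) : c ≤ μ (⋂ l, A l) := by
  rw [hA.measure_iInter (fun l => (hmeas l).nullMeasurableSet) ⟨0, measure_ne_top μ _⟩]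
  exact le_iInf hc

theorem rate_as_convergence_to_rate_au_convergence {Ω : Type*} [MeasurableSpace Ω]
    (μ : Measure Ω) [IsProbabilityMeasure μ]
    (X : ℕ → Ω → ℝ) (hmeas : ∀ n, Measurable (X n))
    (Φ : ℕ → ℕ → ℕ)
    (hΦ : ∀ m k, ∃ n ≤ Φ m k, ∀ l : ℕ,
        1 - (1 / 2 : ℝ≥0∞) ^ m ≤
          μ {ω | ∀ i ∈ Set.Icc n (n + l), ∀ j ∈ Set.Icc n (n + l),
            |X i ω - X j ω| ≤ (1 / 2 : ℝ) ^ k}) :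
    ∀ m k, ∃ n ≤ Φ m k,
      1 - (1 / 2 : ℝ≥0∞) ^ m ≤
        μ {ω | ∀ i ≥ n, ∀ j ≥ n, |X i ω - X j ω| ≤ (1 / 2 : ℝ) ^ k} := by
  intro m k
  obtain ⟨n, hn, hwindow⟩ := hΦ m k
  refine ⟨n, hn, ?_⟩
  have hclose : ∀ i j, MeasurableSet {ω | |X i ω - X j ω| ≤ (1 / 2 : ℝ) ^ k} := fun i j =>
    measurableSet_le ((hmeas i).sub (hmeas j)).abs measurable_const
  rw [← iInter_setOf_forall_Icc]
  exact le_measure_iInter_of_antitone μ (antitone_setOf_forall_Icc _ n)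
    (measurableSet_setOf_forall_Icc _ n hclose) hwindow
end

section
/- Let (x_n)_{n∈ℕ} be a sequence of real numbers, ε > 0, and b ∈ ℕ. Say (x_n) has at most b many ε-fluctuations if there do not exist indices i_1 < j_1 ≤ i_2 < j_2 ≤ … ≤ i_{b+1} < j_{b+1} with |x_{i_l} − x_{j_l}| > ε for all l = 1, …, b+1. If (x_n) has at most b many ε-fluctuations, then for every g : ℕ → ℕ there exists n ≤ g̃^{(b+1)}(0) (the (b+1)-fold iterate of g̃(n) := n + g(n) applied to 0) such that |x_i − x_j| ≤ 2ε for all i, j ∈ [n, n + g(n)]. -/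
open Set

/-- `(x_n)` admits `b + 1` many `ε`-fluctuations: there are indices
`i 0 < j 0 ≤ i 1 < j 1 ≤ … ≤ i b < j b` with `|x (i l) - x (j l)| > ε` for all `l ≤ b`. -/
def HasFluctuations (x : ℕ → ℝ) (ε : ℝ) (b : ℕ) : Prop :=
  ∃ i j : ℕ → ℕ, (∀ l ≤ b, i l < j l) ∧ (∀ l < b, j l ≤ i (l + 1)) ∧
    (∀ l ≤ b, ε < |x (i l) - x (j l)|)

theorem fluctuation_bound_gives_learnable_metastability
    (x : ℕ → ℝ) (ε : ℝ) (hε : 0 < ε) (b : ℕ)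
    (hfluc : ¬ HasFluctuations x ε b) :
    ∀ g : ℕ → ℕ, ∃ n ≤ (fun n => n + g n)^[b + 1] 0,
      ∀ i ∈ Set.Icc n (n + g n), ∀ j ∈ Set.Icc n (n + g n), |x i - x j| ≤ 2 * ε := by
  intro g
  by_contra hcon
  push_neg at hcon
  set f : ℕ → ℕ := fun n => n + g n with hf
  have hfe : ∀ a, a ≤ f a := fun a => Nat.le_add_right _ _
  have hmono : ∀ m a, a ≤ f^[m] a := by
    intro m
    induction m with
    | zero => simp
    | succ k ih =>
      intro a
      rw [Function.iterate_succ_apply]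
      exact (hfe a).trans (ih (f a))
  have hle : ∀ l, l ≤ b + 1 → f^[l] 0 ≤ f^[b + 1] 0 := by
    intro l hl
    obtain ⟨m, hm⟩ := Nat.exists_eq_add_of_le hl
    rw [hm, Nat.add_comm, Function.iterate_add_apply]
    exact hmono m _
  -- for each l, choose indices in the interval starting at `f^[min l b] 0`
  have key : ∀ l, ∃ p q : ℕ, f^[min l b] 0 ≤ p ∧ p ≤ f^[min l b + 1] 0 ∧
      f^[min l b] 0 ≤ q ∧ q ≤ f^[min l b + 1] 0 ∧ 2 * ε < |x p - x q| := by
    intro l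
    obtain ⟨p, hp, q, hq, hpq⟩ := hcon (f^[min l b] 0)
      (hle _ (Nat.le_succ_of_le (Nat.min_le_right l b)))
    refine ⟨p, q, hp.1, ?_, hq.1, ?_, hpq⟩
    · have := hp.2; rwa [Function.iterate_succ_apply']
    · have := hq.2; rwa [Function.iterate_succ_apply']
  choose p q hp1 hp2 hq1 hq2 habs using key
  apply hfluc
  refine ⟨fun l => min (p l) (q l), fun l => max (p l) (q l), ?_, ?_, ?_⟩
  · intro l _
    have hne : p l ≠ q l := by
      intro h
      have := habs l
      rw [h] at this
      simp at this
      linarith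
    exact min_lt_max.mpr hne
  · intro l hl
    have e1 : min l b = l := Nat.min_eq_left (le_of_lt hl)
    have e2 : min (l + 1) b = l + 1 := Nat.min_eq_left hl
    have h1 : max (p l) (q l) ≤ f^[l + 1] 0 := by
      have := max_le (hp2 l) (hq2 l); rwa [e1] at this
    have h2 : f^[l + 1] 0 ≤ min (p (l + 1)) (q (l + 1)) := by
      have := le_min (hp1 (l + 1)) (hq1 (l + 1)); rwa [e2] at this
    exact h1.trans h2
  · intro l _
    have := habs l
    show ε < |x (min (p l) (q l)) - x (max (p l) (q l))|
    rcases le_total (p l) (q l) with h | h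
    · rw [min_eq_left h, max_eq_right h]
      linarith
    · rw [min_eq_right h, max_eq_left h]
      rw [abs_sub_comm] at this
      linarith
end
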